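/- arXiv:0811.0092 — 2 statements merged into one kernel-verified Lean document; each statement's English description precedes it below -/
import Mathlib

section
/- Let (a_n) be a sequence of positive real numbers such that the series ∑ a_n diverges to infinity. Then there exists a sequence (A_j) of subsets of the positive integers such that: (i) the A_j cover ℕ, (ii) each A_j is infinite (has the cardinality of ℕ), (iii) the A_j are pairwise disjoint, and (iv) for each k, the sub-series ∑_{j ∈ A_k} a_j diverges to infinity. -/
/-!
Cut `ℕ` at `0 = n₀ < n₁ < ⋯` so that every block `[nₘ, nₘ₊₁)` carries `a`-mass at least `1`,
which the divergence of the series allows. The `j`-th set collects the blocks with index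
`Nat.pair j i`, `i ∈ ℕ`: since pairing is a bijection `ℕ × ℕ ≃ ℕ`, these sets partition `ℕ`, and
each contains infinitely many disjoint blocks of mass `≥ 1`, so its sub-series diverges.
-/

open Filter Function Set

section Partition

variable {α : Type*}

theorem iUnion_iUnion_pair (B : ℕ → Set α) : ⋃ j, ⋃ i, B (Nat.pair j i) = ⋃ m, B m := by
  rw [← Nat.pairEquiv.surjective.iUnion_comp B, iUnion_prod']
  rfl

theorem pairwise_disjoint_on_iUnion_pair {B : ℕ → Set α} (hB : Pairwise (Disjoint on B)) :
    Pairwise (Disjoint on fun j => ⋃ i, B (Nat.pair j i)) := by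
  intro j j' hjj'
  simp only [onFun, disjoint_iUnion_left, disjoint_iUnion_right]
  exact fun i i' => hB fun h => hjj' (Nat.pair_eq_pair.mp h).1

end Partition

theorem not_summable_of_pairwise_disjoint_one_le_sum {β : Type*} {f : β → ℝ} (hf : ∀ x, 0 ≤ f x)
    {s : ℕ → Finset β} (hs : Pairwise (Disjoint on s)) (hs1 : ∀ i, 1 ≤ ∑ x ∈ s i, f x) :
    ¬Summable f := by
  classical
  intro hsum
  obtain ⟨b, hb⟩ := exists_nat_gt (∑' x, f x)
  have hb_le : (b : ℝ) ≤ ∑ x ∈ (Finset.range b).biUnion s, f x := by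
    rw [Finset.sum_biUnion (hs.set_pairwise _)]
    simpa using Finset.card_nsmul_le_sum (Finset.range b) _ 1 fun i _ => hs1 i
  linarith [hsum.sum_le_tsum ((Finset.range b).biUnion s) fun x _ => hf x]

theorem exists_strictMono_one_le_sum_Ico {a : ℕ → ℝ}
    (hdiv : Tendsto (fun N => ∑ n ∈ Finset.range N, a n) atTop atTop) :
    ∃ n : ℕ → ℕ, StrictMono n ∧ n 0 = 0 ∧ ∀ m, 1 ≤ ∑ i ∈ Finset.Ico (n m) (n (m + 1)), a i := by
  have hnext : ∀ N, ∃ M, N < M ∧ 1 ≤ ∑ i ∈ Finset.Ico N M, a i := fun N => by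
    obtain ⟨M, hM, hNM⟩ := ((tendsto_atTop.mp hdiv (∑ i ∈ Finset.range N, a i + 1)).and
      (eventually_gt_atTop N)).exists
    refine ⟨M, hNM, ?_⟩
    rw [Finset.sum_Ico_eq_sub a hNM.le]
    linarith
  choose next hlt hsum using hnext
  refine ⟨fun m => next^[m] 0, strictMono_nat_of_lt_succ fun m => ?_, rfl, fun m => ?_⟩
  · simpa only [iterate_succ_apply'] using hlt _
  · simpa only [iterate_succ_apply'] using hsum _

theorem StrictMono.iUnion_Ico_succ_eq_univ {n : ℕ → ℕ} (hn : StrictMono n) (hn0 : n 0 = 0) :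
    ⋃ m, Ico (n m) (n (m + 1)) = univ := by
  simpa [hn0] using iUnion_Ico_map_succ_eq_Ici (fun m => hn.monotone (Nat.zero_le m))
    hn.not_bddAbove_range_of_wellFoundedLT

/-- if `(a n)` is a sequence of positive reals whose series diverges to
infinity, then ℕ can be partitioned into countably many pairwise disjoint infinite
sets `A j`, each carrying a divergent sub-series. -/
theorem stmt_0 (a : ℕ → ℝ) (ha : ∀ n, 0 < a n)
    (hdiv : Tendsto (fun N => ∑ n ∈ Finset.range N, a n) atTop atTop) :
    ∃ A : ℕ → Set ℕ,
      (⋃ j, A j) = Set.univ ∧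
      (∀ j, (A j).Infinite) ∧
      (Pairwise fun i j => Disjoint (A i) (A j)) ∧
      ∀ k, Tendsto (fun N => ∑ n ∈ Finset.range N, (A k).indicator a n) atTop atTop := by
  obtain ⟨n, hn, hn0, hblock⟩ := exists_strictMono_one_le_sum_Ico hdiv
  set B : ℕ → Finset ℕ := fun m => Finset.Ico (n m) (n (m + 1))
  have hB_disj : Pairwise (Disjoint on fun m => (B m : Set ℕ)) := by
    simpa [B] using hn.monotone.pairwise_disjoint_on_Ico_succ
  have hpair_inj : ∀ j, Injective (Nat.pair j) := fun j i i' h => (Nat.pair_eq_pair.mp h).2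
  refine ⟨fun j => ⋃ i, (B (Nat.pair j i) : Set ℕ), ?_, fun j => ?_, ?_, fun k => ?_⟩
  · rw [iUnion_iUnion_pair fun m => (B m : Set ℕ), ← hn.iUnion_Ico_succ_eq_univ hn0]
    simp only [B, Finset.coe_Ico]
  · refine infinite_of_injective_forall_mem (hn.injective.comp (hpair_inj j)) fun i => ?_
    exact mem_iUnion_of_mem i (Finset.left_mem_Ico.mpr (hn (Nat.lt_succ_self _)))
  · exact pairwise_disjoint_on_iUnion_pair hB_disj
  · have hnonneg : ∀ x, 0 ≤ (⋃ i, (B (Nat.pair k i) : Set ℕ)).indicator a x :=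
      indicator_nonneg fun x _ => (ha x).le
    rw [← not_summable_iff_tendsto_nat_atTop_of_nonneg hnonneg]
    refine not_summable_of_pairwise_disjoint_one_le_sum hnonneg
      (fun i i' h => Finset.disjoint_coe.mp (hB_disj ((hpair_inj k).ne h))) fun i => ?_
    rw [Finset.sum_congr rfl fun x hx => indicator_of_mem (mem_iUnion_of_mem i hx) a]
    exact hblock _
end

section
/- Let E and F be Banach spaces, and suppose E contains complemented closed subspaces E_1, E_2, ... with bounded linear projections π_j : E → E_j satisfying π_j(x) = x for x ∈ E_j and π_i restricted to E_j is zero for i ≠ j. Suppose for each j there is a bounded linear operator u_j : E_j → F that is not absolutely p-summing (p ≥ 1), and set ũ_j = u_j ∘ π_j : E → F. Then for any n and scalars a_1, ..., a_n not all zero, the operator a_1 ũ_1 + ⋯ + a_n ũ_n is not absolutely p-summing. Consequently the linear span of {ũ_j : j ∈ ℕ} is an infinite-dimensional subspace contained in (L(E;F) \ Π_p(E;F)) ∪ {0}. -/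
open scoped ENNReal ZeroAtInfty

/-- `u : E →L[ℝ] F` is absolutely `p`-summing: there is `C ≥ 0` with
`∑ ‖u (x j)‖^p ≤ C · sup_{‖φ‖ ≤ 1} ∑ |φ (x j)|^p` for all finite families `x`. -/
def AbsPSumming (p : ℝ) {E F : Type*} [NormedAddCommGroup E] [NormedSpace ℝ E]
    [NormedAddCommGroup F] [NormedSpace ℝ F] (u : E →L[ℝ] F) : Prop :=
  ∃ C : ℝ, 0 ≤ C ∧ ∀ (n : ℕ) (x : Fin n → E),
    ∑ j, ‖u (x j)‖ ^ p ≤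
      C * ⨆ φ : {φ : E →L[ℝ] ℝ // ‖φ‖ ≤ 1}, ∑ j, ‖φ.1 (x j)‖ ^ p

/-- `u : E →L[ℝ] F` is absolutely `(q,1)`-summing. -/
def AbsQ1Summing (q : ℝ) {E F : Type*} [NormedAddCommGroup E] [NormedSpace ℝ E]
    [NormedAddCommGroup F] [NormedSpace ℝ F] (u : E →L[ℝ] F) : Prop :=
  ∃ C : ℝ, 0 ≤ C ∧ ∀ (n : ℕ) (x : Fin n → E),
    ∑ j, ‖u (x j)‖ ^ q ≤
      C * (⨆ φ : {φ : E →L[ℝ] ℝ // ‖φ‖ ≤ 1}, ∑ j, ‖φ.1 (x j)‖) ^ q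

/-- A subset `S` of a vector space is lineable if `S ∪ {0}` contains an
infinite-dimensional linear subspace. -/
def Lineable {𝕜 X : Type*} [Field 𝕜] [AddCommGroup X] [Module 𝕜 X] (S : Set X) : Prop :=
  ∃ V : Submodule 𝕜 X, ¬ Module.Finite 𝕜 V ∧ (V : Set X) ⊆ S ∪ {0}

/-- Superreflexivity, via Enflo's theorem: `X` admits an equivalent uniformly convex norm. -/
def SuperReflexive (X : Type*) [NormedAddCommGroup X] [NormedSpace ℝ X] : Prop :=
  ∃ N : X → ℝ, (∀ x, 0 ≤ N x) ∧ (∀ x, N x = 0 ↔ x = 0) ∧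
    (∀ (c : ℝ) (x : X), N (c • x) = |c| * N x) ∧ (∀ x y, N (x + y) ≤ N x + N y) ∧
    (∃ b c : ℝ, 0 < b ∧ 0 < c ∧ ∀ x, b * ‖x‖ ≤ N x ∧ N x ≤ c * ‖x‖) ∧
    (∀ ε : ℝ, 0 < ε → ∃ δ : ℝ, 0 < δ ∧ ∀ x y, N x ≤ 1 → N y ≤ 1 →
      ε ≤ N (x - y) → N (x + y) ≤ 2 - δ)

/-- `e` is an unconditional basic sequence with unconditional constant `ϱ`:
expansions are unique and sign changes of a convergent expansion converge,
with norm at most `ϱ` times the original. -/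
def IsUncondBasicSeq {ι X : Type*} [NormedAddCommGroup X] [NormedSpace ℝ X]
    (e : ι → X) (ϱ : ℝ) : Prop :=
  (∀ a : ι → ℝ, HasSum (fun n => a n • e n) 0 → ∀ n, a n = 0) ∧
  (∀ (a : ι → ℝ) (x : X), HasSum (fun n => a n • e n) x →
    ∀ ε : ι → ℝ, (∀ n, ε n = 1 ∨ ε n = -1) →
      ∃ y, HasSum (fun n => (ε n * a n) • e n) y ∧ ‖y‖ ≤ ϱ * ‖x‖)

/-- `e` is an unconditional Schauder basis of `X` with unconditional constant `ϱ`. -/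
def IsUncondBasis {X : Type*} [NormedAddCommGroup X] [NormedSpace ℝ X]
    (e : ℕ → X) (ϱ : ℝ) : Prop :=
  IsUncondBasicSeq e ϱ ∧ ∀ x : X, ∃ a : ℕ → ℝ, HasSum (fun n => a n • e n) x

/-- The parameter `μ_{E,(x_n)} = inf {t : (a_j) ∈ ℓ_t whenever ∑ a_j x_j converges}`,
computed in `ℝ≥0∞` (so that it is `∞` when no such `t` exists). -/
noncomputable def muPar {ι E : Type*} [NormedAddCommGroup E] [NormedSpace ℝ E]
    (x : ι → E) : ℝ≥0∞ :=
  sInf {s : ℝ≥0∞ | ∃ t : ℝ, s = ENNReal.ofReal t ∧ 0 < t ∧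
    ∀ a : ι → ℝ, (∃ y, HasSum (fun j => a j • x j) y) → Summable fun j => |a j| ^ t}

/-- `F` has cotype `s`. -/
def HasCotype (s : ℝ) (F : Type*) [NormedAddCommGroup F] [NormedSpace ℝ F] : Prop :=
  ∃ C : ℝ, 0 < C ∧ ∀ (n : ℕ) (y : Fin n → F),
    (∑ i, ‖y i‖ ^ s) ^ (1 / s) ≤
      C * ((∑ ε : Fin n → Bool, ‖∑ i, (if ε i then (1:ℝ) else -1) • y i‖ ^ 2) / 2 ^ n)
        ^ (1 / 2 : ℝ)

/-- `cot F = inf {s ≥ 2 : F has cotype s}`, computed in `ℝ≥0∞`. -/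
noncomputable def cotPar (F : Type*) [NormedAddCommGroup F] [NormedSpace ℝ F] : ℝ≥0∞ :=
  sInf {s : ℝ≥0∞ | ∃ r : ℝ, s = ENNReal.ofReal r ∧ 2 ≤ r ∧ HasCotype r F}

section Aux

variable {E F G : Type*} [NormedAddCommGroup E] [NormedSpace ℝ E]
  [NormedAddCommGroup F] [NormedSpace ℝ F] [NormedAddCommGroup G] [NormedSpace ℝ G]

lemma bddAbove_dualSum (p : ℝ) (hp : 1 ≤ p) {n : ℕ} (x : Fin n → E) :
    BddAbove (Set.range fun φ : {φ : E →L[ℝ] ℝ // ‖φ‖ ≤ 1} => ∑ j, ‖φ.1 (x j)‖ ^ p) := by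
  refine ⟨∑ j, ‖x j‖ ^ p, ?_⟩
  rintro - ⟨φ, rfl⟩
  refine Finset.sum_le_sum fun j _ => ?_
  refine Real.rpow_le_rpow (norm_nonneg _) ?_ (by linarith)
  calc ‖φ.1 (x j)‖ ≤ ‖φ.1‖ * ‖x j‖ := φ.1.le_opNorm _
    _ ≤ 1 * ‖x j‖ := by gcongr; exact φ.2
    _ = ‖x j‖ := one_mul _

lemma absPSumming_zero (p : ℝ) (hp : 1 ≤ p) : AbsPSumming p (0 : E →L[ℝ] F) := by
  refine ⟨0, le_refl _, fun n x => ?_⟩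
  simp [Real.zero_rpow (by linarith : p ≠ 0)]

lemma AbsPSumming.comp_le_one (p : ℝ) (hp : 1 ≤ p) {v : E →L[ℝ] F} (hv : AbsPSumming p v)
    (w : G →L[ℝ] E) (hw : ‖w‖ ≤ 1) : AbsPSumming p (v.comp w) := by
  obtain ⟨C, hC0, hC⟩ := hv
  refine ⟨C, hC0, fun n x => ?_⟩
  have h1 := hC n (fun j => w (x j))
  refine h1.trans (mul_le_mul_of_nonneg_left ?_ hC0)
  have hne : Nonempty {φ : E →L[ℝ] ℝ // ‖φ‖ ≤ 1} := ⟨⟨0, by simp⟩⟩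
  refine ciSup_le fun φ => ?_
  have hφw : ‖φ.1.comp w‖ ≤ 1 := by
    calc ‖φ.1.comp w‖ ≤ ‖φ.1‖ * ‖w‖ := φ.1.opNorm_comp_le w
      _ ≤ 1 * 1 := mul_le_mul φ.2 hw (norm_nonneg _) zero_le_one
      _ = 1 := one_mul _
  exact le_ciSup_of_le (bddAbove_dualSum p hp x) ⟨φ.1.comp w, hφw⟩ (le_refl _)

lemma AbsPSumming.of_smul (p : ℝ) (hp : 1 ≤ p) {u : E →L[ℝ] F} {a : ℝ} (ha : a ≠ 0)
    (h : AbsPSumming p (a • u)) : AbsPSumming p u := by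
  obtain ⟨C, hC0, hC⟩ := h
  have hap : (0:ℝ) < |a| ^ p := Real.rpow_pos_of_pos (abs_pos.mpr ha) p
  refine ⟨C / |a| ^ p, div_nonneg hC0 hap.le, fun n x => ?_⟩
  have h1 := hC n x
  have h2 : ∑ j, ‖(a • u) (x j)‖ ^ p = |a| ^ p * ∑ j, ‖u (x j)‖ ^ p := by
    rw [Finset.mul_sum]
    refine Finset.sum_congr rfl fun j _ => ?_
    rw [ContinuousLinearMap.smul_apply, norm_smul, Real.norm_eq_abs,
      Real.mul_rpow (abs_nonneg _) (norm_nonneg _)]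
  rw [h2] at h1
  rw [div_mul_eq_mul_div, le_div_iff₀ hap, mul_comm]
  linarith

end Aux

section Main

variable {E F : Type*} [NormedAddCommGroup E] [NormedSpace ℝ E]
  [NormedAddCommGroup F] [NormedSpace ℝ F]

lemma norm_subtypeL_le' (V : Submodule ℝ E) : ‖V.subtypeL‖ ≤ 1 :=
  ContinuousLinearMap.opNorm_le_bound _ zero_le_one (fun x => by simp)

lemma restrict_sum_eq (Esub : ℕ → Submodule ℝ E)
    (π : (j : ℕ) → (E →L[ℝ] Esub j))
    (hπ : ∀ j (x : Esub j), π j (x : E) = x)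
    (hπ' : ∀ i j, i ≠ j → ∀ x : Esub j, π i (x : E) = 0)
    (u : (j : ℕ) → (Esub j →L[ℝ] F))
    (s : Finset ℕ) (a : ℕ → ℝ) (j : ℕ) (hj : j ∈ s) :
    (∑ k ∈ s, a k • ((u k).comp (π k))).comp (Esub j).subtypeL = a j • (u j) := by
  ext x
  simp only [ContinuousLinearMap.coe_comp', Function.comp_apply,
    ContinuousLinearMap.coe_sum', Finset.sum_apply, ContinuousLinearMap.smul_apply,
    Submodule.coe_subtypeL', Submodule.coe_subtype]
  rw [Finset.sum_eq_single_of_mem j hj]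
  · rw [hπ j x]
  · intro k _ hk
    rw [hπ' k j hk x]
    simp

lemma key_not_summing (p : ℝ) (hp : 1 ≤ p) (Esub : ℕ → Submodule ℝ E)
    (π : (j : ℕ) → (E →L[ℝ] Esub j))
    (hπ : ∀ j (x : Esub j), π j (x : E) = x)
    (hπ' : ∀ i j, i ≠ j → ∀ x : Esub j, π i (x : E) = 0)
    (u : (j : ℕ) → (Esub j →L[ℝ] F))
    (hu : ∀ j, ¬ AbsPSumming p (u j))
    (s : Finset ℕ) (a : ℕ → ℝ) (j : ℕ) (hj : j ∈ s) (haj : a j ≠ 0) :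
    ¬ AbsPSumming p (∑ k ∈ s, a k • ((u k).comp (π k))) := by
  intro hsum
  have h1 : AbsPSumming p ((∑ k ∈ s, a k • ((u k).comp (π k))).comp (Esub j).subtypeL) :=
    hsum.comp_le_one p hp _ (norm_subtypeL_le' (Esub j))
  rw [restrict_sum_eq Esub π hπ hπ' u s a j hj] at h1
  exact hu j (AbsPSumming.of_smul p hp haj h1)

end Main

/-- if `E` contains complemented closed subspaces `Eⱼ` with bounded
projections `π j : E → Eⱼ` satisfying `π j x = x` on `Eⱼ` and `π i = 0` on `Eⱼ` for
`i ≠ j`, and if for each `j` there is `u j : Eⱼ → F` bounded and not absolutely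
`p`-summing (`p ≥ 1`), then with `ũ j = u j ∘ π j`, every nontrivial finite linear
combination of the `ũ j` fails to be absolutely `p`-summing; consequently the span of
`{ũ j : j ∈ ℕ}` is an infinite-dimensional subspace contained in
`(L(E;F) \ Π_p(E;F)) ∪ {0}`. -/
theorem stmt_4 {E F : Type*} [NormedAddCommGroup E] [NormedSpace ℝ E] [CompleteSpace E]
    [NormedAddCommGroup F] [NormedSpace ℝ F] [CompleteSpace F]
    (p : ℝ) (hp : 1 ≤ p)
    (Esub : ℕ → Submodule ℝ E) (hclosed : ∀ j, IsClosed (Esub j : Set E))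
    (π : (j : ℕ) → (E →L[ℝ] Esub j))
    (hπ : ∀ j (x : Esub j), π j (x : E) = x)
    (hπ' : ∀ i j, i ≠ j → ∀ x : Esub j, π i (x : E) = 0)
    (u : (j : ℕ) → (Esub j →L[ℝ] F))
    (hu : ∀ j, ¬ AbsPSumming p (u j)) :
    (∀ (n : ℕ) (a : Fin n → ℝ), (∃ k, a k ≠ 0) →
      ¬ AbsPSumming p (∑ k : Fin n, a k • ((u k).comp (π k)))) ∧
    ¬ Module.Finite ℝ
      (Submodule.span ℝ (Set.range fun j : ℕ => (u j).comp (π j))) ∧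
    (Submodule.span ℝ (Set.range fun j : ℕ => (u j).comp (π j)) : Set (E →L[ℝ] F)) ⊆
      {v : E →L[ℝ] F | ¬ AbsPSumming p v} ∪ {0} := by
  set f : ℕ → (E →L[ℝ] F) := fun j => (u j).comp (π j) with hf
  have hkey : ∀ (s : Finset ℕ) (a : ℕ → ℝ) (j : ℕ), j ∈ s → a j ≠ 0 →
      ¬ AbsPSumming p (∑ k ∈ s, a k • f k) :=
    fun s a j hj haj => key_not_summing p hp Esub π hπ hπ' u hu s a j hj haj
  have part1 : ∀ (n : ℕ) (a : Fin n → ℝ), (∃ k, a k ≠ 0) →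
      ¬ AbsPSumming p (∑ k : Fin n, a k • ((u k).comp (π k))) := by
    intro n a ⟨k0, hk0⟩
    set a' : ℕ → ℝ := fun m => if h : m < n then a ⟨m, h⟩ else 0 with ha'
    have hconv : ∑ k : Fin n, a k • ((u (k : ℕ)).comp (π (k : ℕ)))
        = ∑ m ∈ Finset.range n, a' m • f m := by
      rw [← Fin.sum_univ_eq_sum_range (fun m => a' m • f m) n]
      refine Finset.sum_congr rfl fun k _ => ?_
      simp [ha', hf, k.isLt]
    rw [hconv]
    refine hkey (Finset.range n) a' (k0 : ℕ) (Finset.mem_range.mpr k0.isLt) ?_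
    simpa [ha', k0.isLt] using hk0
  have hli : LinearIndependent ℝ f := by
    rw [linearIndependent_iff']
    intro s g hg i hi
    by_contra hgi
    refine hkey s g i hi hgi ?_
    rw [hg]
    exact absPSumming_zero p hp
  refine ⟨part1, ?_, ?_⟩
  · intro hfin
    have h2 := (linearIndependent_span hli).finite
    exact (instInfiniteNat).not_finite h2
  · intro v hv
    rcases eq_or_ne v 0 with rfl | hv0
    · exact Or.inr rfl
    refine Or.inl ?_
    rw [SetLike.mem_coe, Finsupp.mem_span_range_iff_exists_finsupp] at hv
    obtain ⟨c, hc⟩ := hv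
    rw [Finsupp.sum] at hc
    have hsupp : c.support.Nonempty := by
      rcases Finset.eq_empty_or_nonempty c.support with he | hne
      · exfalso; apply hv0; rw [← hc, he, Finset.sum_empty]
      · exact hne
    obtain ⟨j, hj⟩ := hsupp
    have : ¬ AbsPSumming p (∑ k ∈ c.support, c k • f k) :=
      hkey c.support c j hj (Finsupp.mem_support_iff.mp hj)
    rw [hc] at this
    exact this
end
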